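/- arXiv:math/0603552 — 3 statements merged into one kernel-verified Lean document; each statement's English description precedes it below -/
import Mathlib

section
/- Let n ≥ 1, let a₀ ∈ ℝⁿ, let U be an open neighborhood of a₀ in ℝⁿ, and let F : ℝⁿ → ℝⁿ be differentiable at every point of U, with derivative DF(x) (a continuous linear map ℝⁿ → ℝⁿ). Assume DF(a₀) is invertible, set h₀ = -(DF(a₀))⁻¹ (F(a₀)) and a₁ = a₀ + h₀, and let B̄ be the closed ball in ℝⁿ of radius ‖h₀‖ centered at a₁. Assume B̄ ⊆ U, that DF satisfies the Lipschitz condition ‖DF(u₁) - DF(u₂)‖ ≤ M·‖u₁ - u₂‖ (operator norm on the left) for all u₁, u₂ ∈ B̄, and that ‖F(a₀)‖ · ‖(DF(a₀))⁻¹‖² · M ≤ 1/2. Then there exists exactly one point x ∈ B̄ with F(x) = 0. -/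
/-!
The chord iteration `z (k+1) = z k - (DF a₀)⁻¹ (F (z k))`, started at `a₀`, first steps to
`a₁ = a₀ + h₀`. If `S k` is the length of its first `k` steps, the Lipschitz bound on `DF`
gives `‖z (k+2) - z (k+1)‖ ≤ ‖(DF a₀)⁻¹‖ M (S (k+1)² - S k²) / 2`; comparing with
Kantorovich's majorant polynomial keeps `S k ≤ 2 ‖h₀‖`, so the iterates stay in `B̄` and
converge to a zero.

Two zeros `p ≠ q` in `B̄` would satisfy
`‖q - p‖ ≤ ‖(DF a₀)⁻¹‖ M (‖p - a₀‖ + ‖q - a₀‖) / 2 ‖q - p‖`. The points of `B̄` lie within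
`2 ‖h₀‖` of `a₀`, and by strict convexity only the antipode `a₀ + 2 h₀` attains it; so the
factor is `< 1`.
-/

open Set Metric Filter Topology Finset

section

variable {E G : Type*} [NormedAddCommGroup E] [NormedAddCommGroup G] [NormedSpace ℝ G]

theorem norm_sub_le_two_mul_of_mem_closedBall {a h w : E} (hw : w ∈ closedBall (a + h) ‖h‖) :
    ‖w - a‖ ≤ 2 * ‖h‖ := by
  rw [mem_closedBall, dist_eq_norm] at hw
  calc ‖w - a‖ = ‖(w - (a + h)) + h‖ := by congr 1; abel
    _ ≤ 2 * ‖h‖ := by linarith [norm_add_le (w - (a + h)) h]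

variable [NormedSpace ℝ E]

theorem norm_sub_le_of_norm_deriv_le_affine {f f' : ℝ → G} {a b : ℝ}
    (hf : ∀ t ∈ Icc (0 : ℝ) 1, HasDerivAt f (f' t) t)
    (hbound : ∀ t ∈ Icc (0 : ℝ) 1, ‖f' t‖ ≤ a + b * t) :
    ‖f 1 - f 0‖ ≤ a + b / 2 := by
  have hB : ∀ t : ℝ, HasDerivAt (fun t : ℝ => a * t + b / 2 * t ^ 2) (a + b * t) t := fun t =>
    (((hasDerivAt_id' t).const_mul a).add ((hasDerivAt_pow 2 t).const_mul (b / 2))).congr_deriv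
      (by norm_num; ring)
  have key := image_norm_le_of_norm_deriv_right_le_deriv_boundary (a := 0) (b := 1)
    (f := fun t => f t - f 0) (B := fun t => a * t + b / 2 * t ^ 2)
    (fun t ht => ((hf t ht).sub_const (f 0)).continuousAt.continuousWithinAt)
    (fun t ht => ((hf t (Ico_subset_Icc_self ht)).sub_const (f 0)).hasDerivWithinAt)
    (by simp) hB (fun t ht => hbound t (Ico_subset_Icc_self ht)) (x := 1) (by simp)
  simpa using key

theorem Convex.norm_image_sub_sub_le_of_norm_fderiv_sub_le {f : E → G} {DF : E → E →L[ℝ] G}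
    {s : Set E} (hs : Convex ℝ s) (hf : ∀ z ∈ s, HasFDerivAt f (DF z) z)
    {L : E →L[ℝ] G} {a : E} {M : ℝ} (hM : 0 ≤ M) (hL : ∀ z ∈ s, ‖DF z - L‖ ≤ M * ‖z - a‖)
    {x y : E} (hx : x ∈ s) (hy : y ∈ s) :
    ‖f y - f x - L (y - x)‖ ≤ M * ((‖x - a‖ + ‖y - a‖) / 2) * ‖y - x‖ := by
  set v := y - x
  have hseg : ∀ t ∈ Icc (0 : ℝ) 1, x + t • v ∈ s := fun t ht =>
    hs.add_smul_sub_mem hx hy ht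
  have hderiv : ∀ t ∈ Icc (0 : ℝ) 1,
      HasDerivAt (fun t : ℝ => f (x + t • v) - t • L v) ((DF (x + t • v) - L) v) t := by
    intro t ht
    have hline : HasDerivAt (fun t : ℝ => x + t • v) v t := by
      simpa using ((hasDerivAt_id t).smul_const v).const_add x
    exact ((hf _ (hseg t ht)).comp_hasDerivAt t hline).sub
      (by simpa using (hasDerivAt_id' t).smul_const (L v))
  have hbound : ∀ t ∈ Icc (0 : ℝ) 1, ‖(DF (x + t • v) - L) v‖ ≤
      M * ‖x - a‖ * ‖v‖ + M * (‖y - a‖ - ‖x - a‖) * ‖v‖ * t := by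
    intro t ht
    have hconv : ‖x + t • v - a‖ ≤ (1 - t) * ‖x - a‖ + t * ‖y - a‖ := by
      calc ‖x + t • v - a‖ = ‖(1 - t) • (x - a) + t • (y - a)‖ := by congr 1; module
        _ ≤ (1 - t) * ‖x - a‖ + t * ‖y - a‖ := by
          refine (norm_add_le _ _).trans_eq ?_
          rw [norm_smul, norm_smul, Real.norm_of_nonneg (sub_nonneg.2 ht.2),
            Real.norm_of_nonneg ht.1]
    calc ‖(DF (x + t • v) - L) v‖ ≤ M * ‖x + t • v - a‖ * ‖v‖ :=
          ((DF _ - L).le_opNorm v).trans (by gcongr; exact hL _ (hseg t ht))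
      _ ≤ M * ((1 - t) * ‖x - a‖ + t * ‖y - a‖) * ‖v‖ := by gcongr
      _ = _ := by ring
  have := norm_sub_le_of_norm_deriv_le_affine hderiv hbound
  simp only [zero_smul, add_zero, one_smul, sub_zero, add_sub_cancel, v] at this
  rw [sub_right_comm]
  exact this.trans_eq (by ring)

theorem norm_sub_lt_two_mul_of_mem_closedBall [StrictConvexSpace ℝ E] {a h w : E}
    (hw : w ∈ closedBall (a + h) ‖h‖) (hne : w ≠ a + 2 • h) : ‖w - a‖ < 2 * ‖h‖ := by
  rw [mem_closedBall, dist_eq_norm] at hw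
  have hsplit : w - a = (w - (a + h)) + h := by abel
  rw [hsplit]
  by_cases hray : SameRay ℝ (w - (a + h)) h
  · have hlt : ‖w - (a + h)‖ < ‖h‖ := by
      refine hw.lt_of_ne fun heq => hne ?_
      rw [two_smul, sub_eq_iff_eq_add.1 (hray.eq_of_norm_eq heq)]
      abel
    linarith [norm_add_le (w - (a + h)) h]
  · linarith [norm_add_lt_of_not_sameRay hray]

theorem eq_of_mem_closedBall_of_apply_eq_zero [StrictConvexSpace ℝ E] {f : E → G}
    {DF : E → E →L[ℝ] G} {A : E ≃L[ℝ] G} {a h : E} {M : ℝ} (hM : 0 ≤ M)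
    (hf : ∀ z ∈ closedBall (a + h) ‖h‖, HasFDerivAt f (DF z) z)
    (hDF : ∀ z ∈ closedBall (a + h) ‖h‖, ‖DF z - A‖ ≤ M * ‖z - a‖)
    (hkant : ‖(A.symm : G →L[ℝ] E)‖ * M * ‖h‖ ≤ 1 / 2)
    {p q : E} (hp : p ∈ closedBall (a + h) ‖h‖) (hq : q ∈ closedBall (a + h) ‖h‖)
    (hfp : f p = 0) (hfq : f q = 0) : p = q := by
  by_contra hne
  set c := ‖(A.symm : G →L[ℝ] E)‖
  have hmvt := (convex_closedBall _ _).norm_image_sub_sub_le_of_norm_fderiv_sub_le hf hM hDF hp hq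
  rw [hfp, hfq, sub_self, zero_sub, norm_neg, ContinuousLinearEquiv.coe_coe] at hmvt
  have hinv : ‖q - p‖ ≤ c * ‖A (q - p)‖ := by
    simpa using (A.symm : G →L[ℝ] E).le_opNorm (A (q - p))
  have hsum : ‖p - a‖ + ‖q - a‖ < 4 * ‖h‖ := by
    by_cases hpa : p = a + 2 • h
    · have := norm_sub_lt_two_mul_of_mem_closedBall hq (hpa ▸ Ne.symm hne)
      linarith [norm_sub_le_two_mul_of_mem_closedBall hp]
    · have := norm_sub_lt_two_mul_of_mem_closedBall hp hpa
      linarith [norm_sub_le_two_mul_of_mem_closedBall hq]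
  have hfactor : c * M * ((‖p - a‖ + ‖q - a‖) / 2) < 1 := by
    rcases (mul_nonneg (norm_nonneg _) hM : 0 ≤ c * M).eq_or_lt with hcM | hcM
    · rw [← hcM]; norm_num
    · nlinarith
  have hpos : 0 < ‖q - p‖ := norm_pos_iff.2 (sub_ne_zero.2 (Ne.symm hne))
  have hself : ‖q - p‖ ≤ c * M * ((‖p - a‖ + ‖q - a‖) / 2) * ‖q - p‖ := by
    calc ‖q - p‖ ≤ c * (M * ((‖p - a‖ + ‖q - a‖) / 2) * ‖q - p‖) :=
          hinv.trans (by gcongr)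
      _ = _ := by ring
  nlinarith

/-- `r - t + L t² / 2` is Kantorovich's majorant polynomial: as long as the partial sums
stay below its smaller root, which is at most `2 r`, each step is bounded by its value. -/
theorem sum_range_le_two_mul_of_le_majorant {d : ℕ → ℝ} {r L : ℝ} (hd : ∀ k, 0 ≤ d k)
    (hL : 0 ≤ L) (hLr : L * r ≤ 1 / 2) (hd0 : d 0 ≤ r)
    (hstep : ∀ k, ∑ i ∈ range (k + 1), d i ≤ 2 * r →
      d (k + 1) ≤ L / 2 * ((∑ i ∈ range (k + 1), d i) ^ 2 - (∑ i ∈ range k, d i) ^ 2))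
    (k : ℕ) : ∑ i ∈ range k, d i ≤ 2 * r := by
  have hr : 0 ≤ r := (hd 0).trans hd0
  suffices ∀ k, ∑ i ∈ range k, d i ≤ 2 * r ∧
      d k ≤ r - ∑ i ∈ range k, d i + L / 2 * (∑ i ∈ range k, d i) ^ 2 from (this k).1
  intro k
  induction k with
  | zero => simp [hr, hd0]
  | succ k ih =>
    obtain ⟨hS, hdk⟩ := ih
    have hS0 : 0 ≤ ∑ i ∈ range k, d i := sum_nonneg fun i _ => hd i
    have hS1 : ∑ i ∈ range (k + 1), d i ≤ 2 * r := by
      rw [sum_range_succ]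
      nlinarith [mul_le_mul_of_nonneg_left (mul_self_le_mul_self hS0 hS) hL]
    refine ⟨hS1, ?_⟩
    have := hstep k hS1
    rw [sum_range_succ] at this ⊢
    nlinarith

def chordIterate (f : E → G) (A : E ≃L[ℝ] G) (a : E) (k : ℕ) : E :=
  (fun x => x - A.symm (f x))^[k] a

section chordIterate

variable {f : E → G} {A : E ≃L[ℝ] G} {a : E}

@[simp]
theorem chordIterate_zero : chordIterate f A a 0 = a := rfl

theorem chordIterate_succ (k : ℕ) :
    chordIterate f A a (k + 1) = chordIterate f A a k - A.symm (f (chordIterate f A a k)) :=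
  Function.iterate_succ_apply' _ _ _

theorem chordIterate_succ_sub (k : ℕ) :
    chordIterate f A a (k + 1) - chordIterate f A a k = -A.symm (f (chordIterate f A a k)) := by
  rw [chordIterate_succ, sub_sub_cancel_left]

theorem dist_chordIterate_succ (k : ℕ) :
    dist (chordIterate f A a k) (chordIterate f A a (k + 1)) =
      ‖A.symm (f (chordIterate f A a k))‖ := by
  rw [dist_eq_norm', chordIterate_succ_sub, norm_neg]

theorem dist_chordIterate_le {j k : ℕ} (hjk : j ≤ k) :
    dist (chordIterate f A a j) (chordIterate f A a k) ≤
      ∑ i ∈ Ico j k, ‖A.symm (f (chordIterate f A a i))‖ := by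
  simpa only [dist_chordIterate_succ] using dist_le_Ico_sum_dist (chordIterate f A a) hjk

theorem norm_symm_apply_chordIterate_succ_le {DF : E → E →L[ℝ] G} {s : Set E}
    (hs : Convex ℝ s) (hf : ∀ z ∈ s, HasFDerivAt f (DF z) z) {M : ℝ} (hM : 0 ≤ M)
    (hDF : ∀ z ∈ s, ‖DF z - A‖ ≤ M * ‖z - a‖) {k : ℕ} (hk : chordIterate f A a k ∈ s)
    (hk' : chordIterate f A a (k + 1) ∈ s) :
    ‖A.symm (f (chordIterate f A a (k + 1)))‖ ≤ ‖(A.symm : G →L[ℝ] E)‖ * M *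
      ((‖chordIterate f A a k - a‖ + ‖chordIterate f A a (k + 1) - a‖) / 2) *
        ‖A.symm (f (chordIterate f A a k))‖ := by
  set z := chordIterate f A a
  have hmvt := hs.norm_image_sub_sub_le_of_norm_fderiv_sub_le hf hM hDF hk hk'
  rw [chordIterate_succ_sub, map_neg, ContinuousLinearEquiv.coe_coe,
    ContinuousLinearEquiv.apply_symm_apply, sub_neg_eq_add, sub_add_cancel, norm_neg] at hmvt
  calc ‖A.symm (f (z (k + 1)))‖ ≤ ‖(A.symm : G →L[ℝ] E)‖ * ‖f (z (k + 1))‖ :=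
        (A.symm : G →L[ℝ] E).le_opNorm _
    _ ≤ _ := by rw [mul_assoc _ M, mul_assoc _ (M * _)]; gcongr

end chordIterate

theorem exists_mem_closedBall_apply_eq_zero [CompleteSpace E] {f : E → G}
    {DF : E → E →L[ℝ] G} {A : E ≃L[ℝ] G} {a h : E} {M : ℝ} (hM : 0 ≤ M)
    (hh : h = -A.symm (f a))
    (hf : ∀ z ∈ closedBall (a + h) ‖h‖, HasFDerivAt f (DF z) z)
    (hDF : ∀ z ∈ closedBall (a + h) ‖h‖, ‖DF z - A‖ ≤ M * ‖z - a‖)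
    (hkant : ‖(A.symm : G →L[ℝ] E)‖ * M * ‖h‖ ≤ 1 / 2) :
    ∃ x ∈ closedBall (a + h) ‖h‖, f x = 0 := by
  set z := chordIterate f A a
  set d : ℕ → ℝ := fun k => ‖A.symm (f (z k))‖
  have hd0 : d 0 = ‖h‖ := by simp [d, z, hh]
  have hmem : ∀ k, ∑ i ∈ range k, d i ≤ 2 * ‖h‖ → z k ∈ closedBall (a + h) ‖h‖ := by
    rintro (_ | k) hk
    · simp [z, dist_eq_norm]
    · have hz1 : z 1 = a + h := eq_add_of_sub_eq' ((chordIterate_succ_sub 0).trans hh.symm)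
      rw [mem_closedBall, ← hz1, dist_comm]
      calc dist (z 1) (z (k + 1)) ≤ ∑ i ∈ Ico 1 (k + 1), d i := dist_chordIterate_le (by omega)
        _ = ∑ i ∈ range (k + 1), d i - ‖h‖ := by
          rw [sum_Ico_eq_sub _ (by omega), sum_range_one, hd0]
        _ ≤ ‖h‖ := by linarith
  have hnorm : ∀ k, ‖z k - a‖ ≤ ∑ i ∈ range k, d i := fun k => by
    simpa [dist_eq_norm'] using dist_chordIterate_le (f := f) (A := A) (a := a) (Nat.zero_le k)
  have hbound : ∀ k, ∑ i ∈ range k, d i ≤ 2 * ‖h‖ := by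
    refine sum_range_le_two_mul_of_le_majorant (fun k => norm_nonneg _)
      (mul_nonneg (norm_nonneg _) hM) hkant hd0.le fun k hk => ?_
    have hk' : ∑ i ∈ range k, d i ≤ 2 * ‖h‖ := by
      rw [sum_range_succ] at hk; linarith [norm_nonneg (A.symm (f (z k)))]
    calc d (k + 1) ≤ ‖(A.symm : G →L[ℝ] E)‖ * M * ((‖z k - a‖ + ‖z (k + 1) - a‖) / 2) * d k :=
          norm_symm_apply_chordIterate_succ_le (convex_closedBall _ _) hf hM hDF
            (hmem k hk') (hmem (k + 1) hk)
      _ ≤ ‖(A.symm : G →L[ℝ] E)‖ * M *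
            ((∑ i ∈ range k, d i + ∑ i ∈ range (k + 1), d i) / 2) * d k := by
          gcongr <;> apply hnorm
      _ = _ := by rw [sum_range_succ]; ring
  have hsum : Summable d := summable_of_sum_range_le (fun k => norm_nonneg _) hbound
  obtain ⟨x, hx⟩ := cauchySeq_tendsto_of_complete
    (cauchySeq_of_dist_le_of_summable d (fun k => (dist_chordIterate_succ k).le) hsum)
  have hxB : x ∈ closedBall (a + h) ‖h‖ :=
    isClosed_closedBall.mem_of_tendsto hx (Eventually.of_forall fun k => hmem k (hbound k))
  have hlim : Tendsto d atTop (𝓝 ‖A.symm (f x)‖) :=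
    (A.symm.continuous.tendsto _ |>.comp ((hf x hxB).continuousAt.tendsto.comp hx)).norm
  refine ⟨x, hxB, ?_⟩
  simpa using tendsto_nhds_unique hlim hsum.tendsto_atTop_zero

end

theorem kantorovich_exists_unique_zero_general
    (n : ℕ)
    (F : EuclideanSpace ℝ (Fin n) → EuclideanSpace ℝ (Fin n))
    (DF : EuclideanSpace ℝ (Fin n) →
      (EuclideanSpace ℝ (Fin n) →L[ℝ] EuclideanSpace ℝ (Fin n)))
    (a₀ : EuclideanSpace ℝ (Fin n)) (U : Set (EuclideanSpace ℝ (Fin n)))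
    (hdiff : ∀ x ∈ U, HasFDerivAt F (DF x) x)
    (A : EuclideanSpace ℝ (Fin n) ≃L[ℝ] EuclideanSpace ℝ (Fin n))
    (hA : (A : EuclideanSpace ℝ (Fin n) →L[ℝ] EuclideanSpace ℝ (Fin n)) = DF a₀)
    (h₀ a₁ : EuclideanSpace ℝ (Fin n))
    (hh₀ : h₀ = -(A.symm (F a₀)))
    (ha₁ : a₁ = a₀ + h₀)
    (M : ℝ)
    (hball : Metric.closedBall a₁ ‖h₀‖ ⊆ U)
    (hlip : ∀ u₁ ∈ Metric.closedBall a₁ ‖h₀‖, ∀ u₂ ∈ Metric.closedBall a₁ ‖h₀‖,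
      ‖DF u₁ - DF u₂‖ ≤ M * ‖u₁ - u₂‖)
    (hkant : ‖F a₀‖ *
      ‖(A.symm : EuclideanSpace ℝ (Fin n) →L[ℝ] EuclideanSpace ℝ (Fin n))‖ ^ 2 * M
        ≤ 1 / 2) :
    ∃! x, x ∈ Metric.closedBall a₁ ‖h₀‖ ∧ F x = 0 := by
  subst ha₁
  set c := ‖(A.symm : EuclideanSpace ℝ (Fin n) →L[ℝ] EuclideanSpace ℝ (Fin n))‖
  have ha₀ : a₀ ∈ closedBall (a₀ + h₀) ‖h₀‖ := by simp [dist_eq_norm]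
  have hf : ∀ z ∈ closedBall (a₀ + h₀) ‖h₀‖, HasFDerivAt F (DF z) z :=
    fun z hz => hdiff z (hball hz)
  -- `hlip` forces `0 ≤ M` unless the ball is a point; `max M 0` sidesteps that case.
  have hDF : ∀ z ∈ closedBall (a₀ + h₀) ‖h₀‖, ‖DF z - A‖ ≤ max M 0 * ‖z - a₀‖ :=
    fun z hz => hA ▸ (hlip z hz a₀ ha₀).trans (by gcongr; exact le_max_left M 0)
  have hkant' : c * max M 0 * ‖h₀‖ ≤ 1 / 2 :=
    calc c * max M 0 * ‖h₀‖ ≤ c * max M 0 * (c * ‖F a₀‖) := by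
          rw [hh₀, norm_neg]
          gcongr
          exact ContinuousLinearMap.le_opNorm
            (A.symm : EuclideanSpace ℝ (Fin n) →L[ℝ] EuclideanSpace ℝ (Fin n)) (F a₀)
      _ = ‖F a₀‖ * c ^ 2 * max M 0 := by ring
      _ ≤ 1 / 2 := by
          rcases le_total M 0 with hM | hM
          · simp [max_eq_right hM]
          · rwa [max_eq_left hM]
  obtain ⟨x, hx, hFx⟩ := exists_mem_closedBall_apply_eq_zero (le_max_right M 0) hh₀ hf hDF hkant'
  exact ⟨x, ⟨hx, hFx⟩, fun y hy =>
    eq_of_mem_closedBall_of_apply_eq_zero (le_max_right M 0) hf hDF hkant' hy.1 hx hy.2 hFx⟩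

/-- **Kantorovich's Theorem (existence and uniqueness part).**
Let `F : ℝⁿ → ℝⁿ` be differentiable on an open neighborhood `U` of `a₀` with derivative
`DF`, let `DF a₀` be invertible (given by the continuous linear equivalence `A`),
let `h₀ = -(DF a₀)⁻¹ (F a₀)`, `a₁ = a₀ + h₀`, and let `B̄` be the closed ball of radius
`‖h₀‖` about `a₁`.  If `B̄ ⊆ U`, `DF` is `M`-Lipschitz on `B̄` (operator norm), and
`‖F a₀‖ ⬝ ‖(DF a₀)⁻¹‖² ⬝ M ≤ 1/2`, then `F` has exactly one zero in `B̄`. -/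
theorem kantorovich_exists_unique_zero
    (n : ℕ) (hn : 1 ≤ n)
    (F : EuclideanSpace ℝ (Fin n) → EuclideanSpace ℝ (Fin n))
    (DF : EuclideanSpace ℝ (Fin n) →
      (EuclideanSpace ℝ (Fin n) →L[ℝ] EuclideanSpace ℝ (Fin n)))
    (a₀ : EuclideanSpace ℝ (Fin n)) (U : Set (EuclideanSpace ℝ (Fin n)))
    (hU : IsOpen U) (ha₀U : a₀ ∈ U)
    (hdiff : ∀ x ∈ U, HasFDerivAt F (DF x) x)
    (A : EuclideanSpace ℝ (Fin n) ≃L[ℝ] EuclideanSpace ℝ (Fin n))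
    (hA : (A : EuclideanSpace ℝ (Fin n) →L[ℝ] EuclideanSpace ℝ (Fin n)) = DF a₀)
    (h₀ a₁ : EuclideanSpace ℝ (Fin n))
    (hh₀ : h₀ = -(A.symm (F a₀)))
    (ha₁ : a₁ = a₀ + h₀)
    (M : ℝ)
    (hball : Metric.closedBall a₁ ‖h₀‖ ⊆ U)
    (hlip : ∀ u₁ ∈ Metric.closedBall a₁ ‖h₀‖, ∀ u₂ ∈ Metric.closedBall a₁ ‖h₀‖,
      ‖DF u₁ - DF u₂‖ ≤ M * ‖u₁ - u₂‖)
    (hkant : ‖F a₀‖ *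
      ‖(A.symm : EuclideanSpace ℝ (Fin n) →L[ℝ] EuclideanSpace ℝ (Fin n))‖ ^ 2 * M
        ≤ 1 / 2) :
    ∃! x, x ∈ Metric.closedBall a₁ ‖h₀‖ ∧ F x = 0 :=
  kantorovich_exists_unique_zero_general n F DF a₀ U hdiff A hA h₀ a₁ hh₀ ha₁ M hball hlip hkant
end

section
/- Let n ≥ 1, let a₀ ∈ ℝⁿ, let U be an open neighborhood of a₀ in ℝⁿ, and let F : ℝⁿ → ℝⁿ be differentiable at every point of U, with derivative DF(x). Assume DF(a₀) is invertible, set h₀ = -(DF(a₀))⁻¹ (F(a₀)) and a₁ = a₀ + h₀, and let B̄ be the closed ball in ℝⁿ of radius ‖h₀‖ centered at a₁. Assume B̄ ⊆ U, that DF satisfies the Lipschitz condition ‖DF(u₁) - DF(u₂)‖ ≤ M·‖u₁ - u₂‖ for all u₁, u₂ ∈ B̄, and that ‖F(a₀)‖ · ‖(DF(a₀))⁻¹‖² · M ≤ 1/2. Then the Newton iteration starting at a₀ is well defined for all k — that is, there is a sequence (a_k) with the given a₀ such that for every k, a_k ∈ B̄, DF(a_k) is invertible, and a_{k+1} = a_k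 - (DF(a_k))⁻¹ (F(a_k)) — and this sequence converges to a point x ∈ B̄ satisfying F(x) = 0. -/
/-!
If `x` satisfies Kantorovich's inequality `‖F x‖ ‖DF(x)⁻¹‖² M ≤ 1/2` and `y` is its Newton step,
Taylor's formula with Lipschitz derivative bounds `‖F y‖` by `M/2` times the squared step, while
`‖DF(x)⁻¹ (DF y - DF x)‖ ≤ 1/2` makes `DF y` invertible with `‖DF(y)⁻¹‖ ≤ 2 ‖DF(x)⁻¹‖`. Together
these show that `y` satisfies the inequality again and that the next step is at most half as long.
So the closed balls around the iterates, with radius the preceding step, are nested inside `B̄`;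
the steps decay geometrically, the iterates converge, and the residuals, bounded by the squared
steps, tend to `0`.
-/
open Set Metric Filter Topology
open scoped NNReal Ring

theorem Convex.norm_image_sub_sub_fderiv_le {E G : Type*} [NormedAddCommGroup E]
    [NormedSpace ℝ E] [NormedAddCommGroup G] [NormedSpace ℝ G] {f : E → G} {f' : E → E →L[ℝ] G}
    {s : Set E} {K : ℝ≥0} (hs : Convex ℝ s) (hf : ∀ z ∈ s, HasFDerivWithinAt f (f' z) s z)
    (hlip : LipschitzOnWith K f' s) {x y : E} (hx : x ∈ s) (hy : y ∈ s) :
    ‖f y - f x - f' x (y - x)‖ ≤ K / 2 * ‖y - x‖ ^ 2 := by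
  set h := y - x
  have hseg : MapsTo (fun t : ℝ => x + t • h) (Icc 0 1) s := fun t ht =>
    hs.add_smul_sub_mem hx hy ht
  have hderiv : ∀ t ∈ Icc (0 : ℝ) 1,
      HasDerivWithinAt (fun t : ℝ => f (x + t • h) - f x - t • f' x h)
        (f' (x + t • h) h - f' x h) (Icc 0 1) t := by
    intro t ht
    have hline : HasDerivWithinAt (fun t : ℝ => x + t • h) h (Icc 0 1) t := by
      simpa using (((hasDerivAt_id t).smul_const h).const_add x).hasDerivWithinAt
    have := (((hf _ (hseg ht)).comp_hasDerivWithinAt t hline hseg).sub_const (f x)).sub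
      ((hasDerivAt_id' t).smul_const (f' x h)).hasDerivWithinAt
    rwa [one_smul] at this
  have hbound : ∀ t ∈ Ico (0 : ℝ) 1, ‖f' (x + t • h) h - f' x h‖ ≤ K * ‖h‖ ^ 2 * t := by
    intro t ht
    calc ‖f' (x + t • h) h - f' x h‖ = ‖(f' (x + t • h) - f' x) h‖ := rfl
      _ ≤ ‖f' (x + t • h) - f' x‖ * ‖h‖ := ContinuousLinearMap.le_opNorm _ _
      _ ≤ K * ‖x + t • h - x‖ * ‖h‖ := by
        gcongr; exact hlip.norm_sub_le (hseg (Ico_subset_Icc_self ht)) hx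
      _ = K * ‖h‖ ^ 2 * t := by
        rw [add_sub_cancel_left, norm_smul, Real.norm_of_nonneg ht.1]; ring
  have hquad : ∀ t : ℝ, HasDerivAt (fun t => K / 2 * ‖h‖ ^ 2 * t ^ 2) (K * ‖h‖ ^ 2 * t) t :=
    fun t => ((hasDerivAt_pow 2 t).const_mul _).congr_deriv (by ring)
  have := image_norm_le_of_norm_deriv_right_le_deriv_boundary
    (fun t ht => (hderiv t ht).continuousWithinAt)
    (fun t ht => (hderiv t (Ico_subset_Icc_self ht)).mono_of_mem_nhdsWithin
      (Icc_mem_nhdsGE_of_mem ht)) (by simp) hquad hbound (right_mem_Icc.2 zero_le_one)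
  simpa [h] using this

theorem IsUnit.of_norm_inverse_mul_sub_le {R : Type*} [NormedRing R] [HasSummableGeomSeries R]
    {a b : R} (ha : IsUnit a) {r : ℝ} (hr : r < 1) (h : ‖a⁻¹ʳ * (b - a)‖ ≤ r) :
    IsUnit b ∧ ‖b⁻¹ʳ‖ ≤ ‖a⁻¹ʳ‖ / (1 - r) := by
  have hb : IsUnit b := by
    have hsmall : ‖-(a⁻¹ʳ * (b - a))‖ < 1 := by rw [norm_neg]; linarith
    have : b = a * (1 - -(a⁻¹ʳ * (b - a))) := by
      rw [sub_neg_eq_add, mul_add, mul_one, Ring.mul_inverse_cancel_left _ _ ha, add_sub_cancel]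
    rw [this]
    exact ha.mul (Units.oneSub _ hsmall).isUnit
  refine ⟨hb, ?_⟩
  have hresolvent : b⁻¹ʳ = a⁻¹ʳ - a⁻¹ʳ * (b - a) * b⁻¹ʳ := by
    rw [mul_sub, sub_mul, Ring.mul_inverse_cancel_right _ _ hb, Ring.inverse_mul_cancel _ ha,
      one_mul, sub_sub_cancel]
  have : ‖b⁻¹ʳ‖ ≤ ‖a⁻¹ʳ‖ + r * ‖b⁻¹ʳ‖ :=
    calc ‖b⁻¹ʳ‖ = ‖a⁻¹ʳ - a⁻¹ʳ * (b - a) * b⁻¹ʳ‖ := congrArg _ hresolvent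
      _ ≤ ‖a⁻¹ʳ‖ + ‖a⁻¹ʳ * (b - a)‖ * ‖b⁻¹ʳ‖ :=
        (norm_sub_le _ _).trans (by gcongr; exact norm_mul_le _ _)
      _ ≤ ‖a⁻¹ʳ‖ + r * ‖b⁻¹ʳ‖ := by gcongr
  rw [le_div_iff₀ (by linarith)]
  linarith

theorem IsUnit.exists_continuousLinearEquiv {R M : Type*} [Semiring R] [AddCommMonoid M]
    [Module R M] [TopologicalSpace M] {f : M →L[R] M} (hf : IsUnit f) :
    ∃ e : M ≃L[R] M, (e : M →L[R] M) = f ∧ (e.symm : M →L[R] M) = f⁻¹ʳ := by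
  obtain ⟨u, rfl⟩ := hf
  exact ⟨.ofUnit u, rfl, (Ring.inverse_unit u).symm⟩

section Newton

variable {E : Type*} [NormedAddCommGroup E] [NormedSpace ℝ E]

/-- Where `DF x` is not invertible, `Ring.inverse` makes this the junk step `x`. -/
noncomputable def newtonMap (F : E → E) (DF : E → E →L[ℝ] E) (x : E) : E :=
  x - (DF x)⁻¹ʳ (F x)

def KantorovichCondition (F : E → E) (DF : E → E →L[ℝ] E) (K : ℝ) (x : E) : Prop :=
  IsUnit (DF x) ∧ ‖F x‖ * ‖(DF x)⁻¹ʳ‖ ^ 2 * K ≤ 1 / 2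

variable {F : E → E} {DF : E → E →L[ℝ] E}

theorem norm_newtonMap_sub_le (x : E) : ‖newtonMap F DF x - x‖ ≤ ‖(DF x)⁻¹ʳ‖ * ‖F x‖ := by
  rw [newtonMap, sub_sub_cancel_left, norm_neg]
  exact ContinuousLinearMap.le_opNorm _ _

theorem apply_newtonMap_sub {x : E} (hx : IsUnit (DF x)) :
    DF x (newtonMap F DF x - x) = -F x := by
  rw [newtonMap, sub_sub_cancel_left, map_neg, ← mul_apply_eq_comp,
    Ring.mul_inverse_cancel _ hx, one_apply_eq_self]

theorem Convex.norm_image_newtonMap_le {s : Set E} {K : ℝ≥0} (hs : Convex ℝ s)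
    (hF : ∀ z ∈ s, HasFDerivWithinAt F (DF z) s z) (hlip : LipschitzOnWith K DF s) {x : E}
    (hx : x ∈ s) (hy : newtonMap F DF x ∈ s) (hunit : IsUnit (DF x)) :
    ‖F (newtonMap F DF x)‖ ≤ K / 2 * ‖newtonMap F DF x - x‖ ^ 2 := by
  simpa [apply_newtonMap_sub hunit] using hs.norm_image_sub_sub_fderiv_le hF hlip hx hy

theorem KantorovichCondition.newton_step {s : Set E} {K : ℝ≥0} [CompleteSpace E]
    (hs : Convex ℝ s) (hF : ∀ z ∈ s, HasFDerivWithinAt F (DF z) s z)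
    (hlip : LipschitzOnWith K DF s) {x : E} (hx : x ∈ s) (hy : newtonMap F DF x ∈ s)
    (hkant : KantorovichCondition F DF K x) :
    KantorovichCondition F DF K (newtonMap F DF x) ∧
      ‖newtonMap F DF (newtonMap F DF x) - newtonMap F DF x‖ ≤ ‖newtonMap F DF x - x‖ / 2 := by
  set y := newtonMap F DF x
  set c := ‖(DF x)⁻¹ʳ‖
  set d := ‖y - x‖
  have hd : d ≤ c * ‖F x‖ := norm_newtonMap_sub_le x
  have hcKd : c * K * d ≤ 1 / 2 :=
    calc c * K * d ≤ c * K * (c * ‖F x‖) := by gcongr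
      _ = ‖F x‖ * c ^ 2 * K := by ring
      _ ≤ 1 / 2 := hkant.2
  have hFy : ‖F y‖ ≤ K / 2 * d ^ 2 := hs.norm_image_newtonMap_le hF hlip hx hy hkant.1
  have hpert : ‖(DF x)⁻¹ʳ * (DF y - DF x)‖ ≤ 1 / 2 :=
    calc ‖(DF x)⁻¹ʳ * (DF y - DF x)‖ ≤ c * ‖DF y - DF x‖ := norm_mul_le _ _
      _ ≤ c * (K * d) := by gcongr; exact hlip.norm_sub_le hy hx
      _ ≤ 1 / 2 := by linarith
  obtain ⟨hunit, hc'⟩ := hkant.1.of_norm_inverse_mul_sub_le (by norm_num) hpert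
  replace hc' : ‖(DF y)⁻¹ʳ‖ ≤ 2 * c := hc'.trans_eq (by ring)
  refine ⟨⟨hunit, ?_⟩, ?_⟩
  · calc ‖F y‖ * ‖(DF y)⁻¹ʳ‖ ^ 2 * K ≤ K / 2 * d ^ 2 * (2 * c) ^ 2 * K := by gcongr
      _ = 2 * (c * K * d) ^ 2 := by ring
      _ ≤ 2 * (1 / 2) ^ 2 := by gcongr
      _ = 1 / 2 := by norm_num
  · calc ‖newtonMap F DF y - y‖ ≤ ‖(DF y)⁻¹ʳ‖ * ‖F y‖ := norm_newtonMap_sub_le y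
      _ ≤ 2 * c * (K / 2 * d ^ 2) := by gcongr
      _ = c * K * d * d := by ring
      _ ≤ 1 / 2 * d := by gcongr
      _ = d / 2 := by ring

theorem KantorovichCondition.newton_iterate [CompleteSpace E] {s : Set E} {K : ℝ≥0} {a₀ : E}
    (hs : Convex ℝ s) (hF : ∀ z ∈ s, HasFDerivWithinAt F (DF z) s z)
    (hlip : LipschitzOnWith K DF s)
    (hball : closedBall (newtonMap F DF a₀) ‖newtonMap F DF a₀ - a₀‖ ⊆ s)
    (h₀ : KantorovichCondition F DF K a₀) (k : ℕ) :
    KantorovichCondition F DF K ((newtonMap F DF)^[k] a₀) ∧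
      closedBall ((newtonMap F DF)^[k + 1] a₀)
          ‖(newtonMap F DF)^[k + 1] a₀ - (newtonMap F DF)^[k] a₀‖ ⊆
        closedBall (newtonMap F DF a₀) ‖newtonMap F DF a₀ - a₀‖ := by
  induction k with
  | zero => exact ⟨h₀, subset_rfl⟩
  | succ k ih =>
    obtain ⟨hk, hsub⟩ := ih
    simp only [Function.iterate_succ_apply'] at hsub ⊢
    set x := (newtonMap F DF)^[k] a₀
    have hx : x ∈ s := hball <| hsub <| by rw [mem_closedBall, dist_eq_norm, norm_sub_rev]
    have hy : newtonMap F DF x ∈ s := hball <| hsub <| mem_closedBall_self (norm_nonneg _)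
    obtain ⟨hky, hhalf⟩ := hk.newton_step hs hF hlip hx hy
    refine ⟨hky, (closedBall_subset_closedBall' ?_).trans hsub⟩
    rw [dist_eq_norm]
    linarith

theorem KantorovichCondition.tendsto_newton_iterate [CompleteSpace E] {s : Set E} {K : ℝ≥0}
    {a₀ : E} (hs : Convex ℝ s) (hF : ∀ z ∈ s, HasFDerivWithinAt F (DF z) s z)
    (hlip : LipschitzOnWith K DF s)
    (hball : closedBall (newtonMap F DF a₀) ‖newtonMap F DF a₀ - a₀‖ ⊆ s)
    (h₀ : KantorovichCondition F DF K a₀) :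
    (∀ k, (newtonMap F DF)^[k] a₀ ∈ closedBall (newtonMap F DF a₀) ‖newtonMap F DF a₀ - a₀‖ ∧
        IsUnit (DF ((newtonMap F DF)^[k] a₀))) ∧
      ∃ x ∈ closedBall (newtonMap F DF a₀) ‖newtonMap F DF a₀ - a₀‖,
        F x = 0 ∧ Tendsto (fun k => (newtonMap F DF)^[k] a₀) atTop (𝓝 x) := by
  set a : ℕ → E := fun k => (newtonMap F DF)^[k] a₀
  have hsucc (k : ℕ) : a (k + 1) = newtonMap F DF (a k) := Function.iterate_succ_apply' _ _ _
  have hinvariant := h₀.newton_iterate hs hF hlip hball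
  have hmem (k : ℕ) : a k ∈ closedBall (a 1) ‖a 1 - a 0‖ :=
    (hinvariant k).2 <| by rw [mem_closedBall, dist_eq_norm, norm_sub_rev]
  have hmem_s (k : ℕ) : a k ∈ s := hball (hmem k)
  have hhalf (k : ℕ) : ‖a (k + 2) - a (k + 1)‖ ≤ ‖a (k + 1) - a k‖ / 2 := by
    rw [hsucc (k + 1), hsucc k]
    exact ((hinvariant k).1.newton_step hs hF hlip (hmem_s k) (hsucc k ▸ hmem_s (k + 1))).2
  have hgeom (k : ℕ) : dist (a k) (a (k + 1)) ≤ ‖a 1 - a 0‖ * (1 / 2) ^ k := by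
    rw [dist_comm, dist_eq_norm]
    induction k with
    | zero => simp
    | succ k ih => rw [pow_succ]; linarith [hhalf k]
  obtain ⟨x, hx⟩ :=
    cauchySeq_tendsto_of_complete (cauchySeq_of_le_geometric _ _ (by norm_num) hgeom)
  have hxB : x ∈ closedBall (a 1) ‖a 1 - a 0‖ :=
    isClosed_closedBall.mem_of_tendsto hx (Eventually.of_forall hmem)
  have hx' : Tendsto (fun k => a (k + 1)) atTop (𝓝 x) := hx.comp (tendsto_add_atTop_nat 1)
  have hFx : Tendsto (fun k => F (a (k + 1))) atTop (𝓝 (F x)) :=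
    (hF x (hball hxB)).continuousWithinAt.tendsto.comp
      (tendsto_nhdsWithin_iff.2 ⟨hx', Eventually.of_forall fun k => hmem_s (k + 1)⟩)
  have hres : Tendsto (fun k => F (a (k + 1))) atTop (𝓝 0) := by
    have hstep : Tendsto (fun k => ‖a (k + 1) - a k‖) atTop (𝓝 0) := by
      simpa using (hx'.sub hx).norm
    refine squeeze_zero_norm (fun k => ?_) (by simpa using (hstep.pow 2).const_mul ((K : ℝ) / 2))
    rw [hsucc]
    exact hs.norm_image_newtonMap_le hF hlip (hmem_s k) (hsucc k ▸ hmem_s (k + 1))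
      (hinvariant k).1.1
  exact ⟨fun k => ⟨hmem k, (hinvariant k).1.1⟩, x, hxB, tendsto_nhds_unique hFx hres, hx⟩

end Newton

theorem kantorovich_newton_converges_general
    (n : ℕ)
    (F : EuclideanSpace ℝ (Fin n) → EuclideanSpace ℝ (Fin n))
    (DF : EuclideanSpace ℝ (Fin n) →
      (EuclideanSpace ℝ (Fin n) →L[ℝ] EuclideanSpace ℝ (Fin n)))
    (a₀ : EuclideanSpace ℝ (Fin n)) (U : Set (EuclideanSpace ℝ (Fin n)))
    (hdiff : ∀ x ∈ U, HasFDerivAt F (DF x) x)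
    (A : EuclideanSpace ℝ (Fin n) ≃L[ℝ] EuclideanSpace ℝ (Fin n))
    (hA : (A : EuclideanSpace ℝ (Fin n) →L[ℝ] EuclideanSpace ℝ (Fin n)) = DF a₀)
    (h₀ a₁ : EuclideanSpace ℝ (Fin n))
    (hh₀ : h₀ = -(A.symm (F a₀)))
    (ha₁ : a₁ = a₀ + h₀)
    (M : ℝ)
    (hball : Metric.closedBall a₁ ‖h₀‖ ⊆ U)
    (hlip : ∀ u₁ ∈ Metric.closedBall a₁ ‖h₀‖, ∀ u₂ ∈ Metric.closedBall a₁ ‖h₀‖,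
      ‖DF u₁ - DF u₂‖ ≤ M * ‖u₁ - u₂‖)
    (hkant : ‖F a₀‖ *
      ‖(A.symm : EuclideanSpace ℝ (Fin n) →L[ℝ] EuclideanSpace ℝ (Fin n))‖ ^ 2 * M
        ≤ 1 / 2) :
    ∃ a : ℕ → EuclideanSpace ℝ (Fin n),
      a 0 = a₀ ∧
      (∀ k : ℕ, a k ∈ Metric.closedBall a₁ ‖h₀‖ ∧
        ∃ Ak : EuclideanSpace ℝ (Fin n) ≃L[ℝ] EuclideanSpace ℝ (Fin n),
          (Ak : EuclideanSpace ℝ (Fin n) →L[ℝ] EuclideanSpace ℝ (Fin n)) = DF (a k) ∧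
          a (k + 1) = a k - Ak.symm (F (a k))) ∧
      ∃ x ∈ Metric.closedBall a₁ ‖h₀‖,
        F x = 0 ∧ Filter.Tendsto a Filter.atTop (nhds x) := by
  have hinv : (DF a₀)⁻¹ʳ = A.symm := hA ▸ Ring.inverse_unit A.toUnit
  have hN : newtonMap F DF a₀ = a₁ := by rw [newtonMap, hinv, ha₁, hh₀, sub_eq_add_neg]; rfl
  have hr : ‖newtonMap F DF a₀ - a₀‖ = ‖h₀‖ := by rw [hN, ha₁, add_sub_cancel_left]
  have h0 : KantorovichCondition F DF M.toNNReal a₀ := by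
    refine ⟨hA ▸ A.toUnit.isUnit, ?_⟩
    rw [hinv, Real.coe_toNNReal']
    rcases le_total 0 M with hM | hM
    · rwa [max_eq_left hM]
    · rw [max_eq_right hM, mul_zero]; norm_num
  obtain ⟨hiter, x, hxB, hFx, hx⟩ := h0.tendsto_newton_iterate (convex_closedBall a₁ ‖h₀‖)
    (fun z hz => (hdiff z (hball hz)).hasFDerivWithinAt)
    (.of_dist_le' fun u hu v hv => by simpa only [dist_eq_norm] using hlip u hu v hv)
    (by rw [hr, hN])
  rw [hr, hN] at hiter hxB
  refine ⟨fun k => (newtonMap F DF)^[k] a₀, rfl, fun k => ⟨(hiter k).1, ?_⟩, x, hxB, hFx, hx⟩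
  obtain ⟨e, he, he_symm⟩ := (hiter k).2.exists_continuousLinearEquiv
  exact ⟨e, he, by dsimp only; rw [Function.iterate_succ_apply', newtonMap, ← he_symm]; rfl⟩

/-- **Kantorovich's Theorem (Newton's method convergence part).**
Under the Kantorovich hypotheses, the Newton iteration starting at `a₀` is well defined:
there is a sequence `a : ℕ → ℝⁿ` with `a 0 = a₀` such that for every `k`, `a k` lies in
the closed ball `B̄`, the derivative `DF (a k)` is invertible, and
`a (k+1) = a k - (DF (a k))⁻¹ (F (a k))`; moreover this sequence converges to a point
`x ∈ B̄` with `F x = 0`. -/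
theorem kantorovich_newton_converges
    (n : ℕ) (hn : 1 ≤ n)
    (F : EuclideanSpace ℝ (Fin n) → EuclideanSpace ℝ (Fin n))
    (DF : EuclideanSpace ℝ (Fin n) →
      (EuclideanSpace ℝ (Fin n) →L[ℝ] EuclideanSpace ℝ (Fin n)))
    (a₀ : EuclideanSpace ℝ (Fin n)) (U : Set (EuclideanSpace ℝ (Fin n)))
    (hU : IsOpen U) (ha₀U : a₀ ∈ U)
    (hdiff : ∀ x ∈ U, HasFDerivAt F (DF x) x)
    (A : EuclideanSpace ℝ (Fin n) ≃L[ℝ] EuclideanSpace ℝ (Fin n))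
    (hA : (A : EuclideanSpace ℝ (Fin n) →L[ℝ] EuclideanSpace ℝ (Fin n)) = DF a₀)
    (h₀ a₁ : EuclideanSpace ℝ (Fin n))
    (hh₀ : h₀ = -(A.symm (F a₀)))
    (ha₁ : a₁ = a₀ + h₀)
    (M : ℝ)
    (hball : Metric.closedBall a₁ ‖h₀‖ ⊆ U)
    (hlip : ∀ u₁ ∈ Metric.closedBall a₁ ‖h₀‖, ∀ u₂ ∈ Metric.closedBall a₁ ‖h₀‖,
      ‖DF u₁ - DF u₂‖ ≤ M * ‖u₁ - u₂‖)
    (hkant : ‖F a₀‖ *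
      ‖(A.symm : EuclideanSpace ℝ (Fin n) →L[ℝ] EuclideanSpace ℝ (Fin n))‖ ^ 2 * M
        ≤ 1 / 2) :
    ∃ a : ℕ → EuclideanSpace ℝ (Fin n),
      a 0 = a₀ ∧
      (∀ k : ℕ, a k ∈ Metric.closedBall a₁ ‖h₀‖ ∧
        ∃ Ak : EuclideanSpace ℝ (Fin n) ≃L[ℝ] EuclideanSpace ℝ (Fin n),
          (Ak : EuclideanSpace ℝ (Fin n) →L[ℝ] EuclideanSpace ℝ (Fin n)) = DF (a k) ∧
          a (k + 1) = a k - Ak.symm (F (a k))) ∧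
      ∃ x ∈ Metric.closedBall a₁ ‖h₀‖,
        F x = 0 ∧ Filter.Tendsto a Filter.atTop (nhds x) :=
  kantorovich_newton_converges_general n F DF a₀ U hdiff A hA h₀ a₁ hh₀ ha₁ M hball hlip hkant
end

section
/- Let x ∈ H³, let k ≥ 1, and let v₁, …, v_k ∈ ℝ⁴ be pairwise distinct vectors with ⟨vᵢ, vᵢ⟩ = 1 and ⟨x, vᵢ⟩ = 0 for all i, and with ⟨vᵢ, vⱼ⟩ ≤ 0 for all i ≠ j. Suppose further that there exists u ∈ ℝ⁴ with ⟨x, u⟩ = 0 and ⟨u, vᵢ⟩ < 0 for every i. Then k ≤ 3. (Equivalently: the unit normal vectors of the faces of a non-obtuse hyperbolic polyhedron that pass through a common vertex x, all having a common strictly interior direction at x, number at most 3.) -/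
/-- The Minkowski bilinear form on `ℝ⁴`:
`⟨x, y⟩ = -x₀y₀ + x₁y₁ + x₂y₂ + x₃y₃`. -/
def mink (x y : Fin 4 → ℝ) : ℝ :=
  -(x 0 * y 0) + x 1 * y 1 + x 2 * y 2 + x 3 * y 3

/-- Hyperbolic space `H³ = {x ∈ ℝ⁴ : ⟨x, x⟩ = -1, x₀ > 0}`. -/
def H3 : Set (Fin 4 → ℝ) := {x | mink x x = -1 ∧ 0 < x 0}

noncomputable def minkB : (Fin 4 → ℝ) →ₗ[ℝ] (Fin 4 → ℝ) →ₗ[ℝ] ℝ :=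
  LinearMap.mk₂ ℝ mink
    (by intro a b c; simp [mink]; ring)
    (by intro r a b; simp [mink]; ring)
    (by intro a b c; simp [mink]; ring)
    (by intro r a b; simp [mink]; ring)

@[simp] lemma minkB_apply (a b : Fin 4 → ℝ) : minkB a b = mink a b := rfl

lemma minkB_sum_right {ι : Type*} (y : Fin 4 → ℝ) (s : Finset ι) (a : ι → ℝ)
    (f : ι → Fin 4 → ℝ) :
    minkB y (∑ i ∈ s, a i • f i) = ∑ i ∈ s, a i * mink y (f i) := by
  simp [map_sum, map_smul, smul_eq_mul]

lemma minkB_sum_sum {ι : Type*} (s t : Finset ι) (a b : ι → ℝ) (f : ι → Fin 4 → ℝ) :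
    minkB (∑ i ∈ s, a i • f i) (∑ j ∈ t, b j • f j)
      = ∑ i ∈ s, ∑ j ∈ t, a i * (b j * mink (f i) (f j)) := by
  simp only [map_sum, LinearMap.sum_apply, map_smul, LinearMap.smul_apply, smul_eq_mul,
    Finset.mul_sum, minkB_apply]
  rw [Finset.sum_comm]
  exact Finset.sum_congr rfl fun i _ => Finset.sum_congr rfl fun j _ => by ring

set_option maxHeartbeats 1000000 in
lemma mink_posdef (x w : Fin 4 → ℝ) (hx : x ∈ H3) (hw : mink x w = 0)
    (hle : mink w w ≤ 0) : w = 0 := by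
  obtain ⟨hxx, hx0⟩ := hx
  simp only [mink] at hxx hw hle
  have heq : x 0 * w 0 = x 1 * w 1 + x 2 * w 2 + x 3 * w 3 := by linarith
  have lag : (x 1 * w 1 + x 2 * w 2 + x 3 * w 3) ^ 2 ≤
      (x 1 ^ 2 + x 2 ^ 2 + x 3 ^ 2) * (w 1 ^ 2 + w 2 ^ 2 + w 3 ^ 2) := by
    nlinarith [sq_nonneg (x 1 * w 2 - x 2 * w 1), sq_nonneg (x 1 * w 3 - x 3 * w 1),
      sq_nonneg (x 2 * w 3 - x 3 * w 2)]
  have hx1 : (x 0) ^ 2 - 1 = x 1 ^ 2 + x 2 ^ 2 + x 3 ^ 2 := by nlinarith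
  have hSw : w 1 ^ 2 + w 2 ^ 2 + w 3 ^ 2 ≤ w 0 ^ 2 := by nlinarith
  have hfac : ((x 0) ^ 2 - 1) * (w 0 ^ 2 - (w 1 ^ 2 + w 2 ^ 2 + w 3 ^ 2)) ≥ 0 := by
    apply mul_nonneg
    · nlinarith [sq_nonneg (x 1), sq_nonneg (x 2), sq_nonneg (x 3)]
    · linarith
  have key : (x 0 * w 0) ^ 2 = (x 1 * w 1 + x 2 * w 2 + x 3 * w 3) ^ 2 := by rw [heq]
  have h0 : w 0 ^ 2 ≤ 0 := by nlinarith [key, lag, hfac, hx1]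
  have hw0 : w 0 = 0 := sq_eq_zero_iff.mp (le_antisymm h0 (sq_nonneg _))
  have hz : w 0 * w 0 = 0 := by rw [hw0]; ring
  have hS : w 1 * w 1 + w 2 * w 2 + w 3 * w 3 ≤ 0 := by linarith [hz]
  have h1 : w 1 = 0 := mul_self_eq_zero.mp (le_antisymm
    (by linarith [mul_self_nonneg (w 2), mul_self_nonneg (w 3)]) (mul_self_nonneg _))
  have h2 : w 2 = 0 := mul_self_eq_zero.mp (le_antisymm
    (by linarith [mul_self_nonneg (w 1), mul_self_nonneg (w 3)]) (mul_self_nonneg _))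
  have h3 : w 3 = 0 := mul_self_eq_zero.mp (le_antisymm
    (by linarith [mul_self_nonneg (w 1), mul_self_nonneg (w 2)]) (mul_self_nonneg _))
  funext i
  fin_cases i <;> simp [hw0, h1, h2, h3]

/-- **A vertex of a non-obtuse hyperbolic polyhedron lies on at most 3 faces:**
if `x ∈ H³`, and `v₁, …, v_k` are pairwise distinct unit spacelike vectors orthogonal
to `x` with pairwise non-positive Minkowski inner products (non-obtuse dihedral
angles), and there is a vector `u` orthogonal to `x` with `⟨u, vᵢ⟩ < 0` for all `i`
(a common strictly interior direction), then `k ≤ 3`. -/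
theorem nonobtuse_vertex_at_most_three_faces
    (x : Fin 4 → ℝ) (hx : x ∈ H3) (k : ℕ) (hk : 1 ≤ k)
    (v : Fin k → (Fin 4 → ℝ)) (hinj : Function.Injective v)
    (hunit : ∀ i, mink (v i) (v i) = 1)
    (horth : ∀ i, mink x (v i) = 0)
    (hnonobtuse : ∀ i j, i ≠ j → mink (v i) (v j) ≤ 0)
    (hinterior : ∃ u : Fin 4 → ℝ, mink x u = 0 ∧ ∀ i, mink u (v i) < 0) :
    k ≤ 3 := by
  obtain ⟨u, hxu, huv⟩ := hinterior
  set W : Submodule ℝ (Fin 4 → ℝ) := LinearMap.ker (minkB x) with hW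
  have hvW : ∀ i, v i ∈ W := fun i => by
    simp [hW, LinearMap.mem_ker, horth i]
  -- W has dimension 3
  have hrange : LinearMap.range (minkB x) = ⊤ := by
    rw [LinearMap.range_eq_top]
    intro c
    refine ⟨(-c) • x, ?_⟩
    have hxx : minkB x x = -1 := hx.1
    rw [map_smul, hxx]
    simp
  have hdimW : Module.finrank ℝ W = 3 := by
    have h := LinearMap.finrank_range_add_finrank_ker (minkB x)
    rw [hrange, finrank_top] at h
    simp only [Module.finrank_self] at h
    have h4 : Module.finrank ℝ (Fin 4 → ℝ) = 4 := by simp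
    rw [h4, ← hW] at h
    omega
  -- v is linearly independent
  have hli : LinearIndependent ℝ v := by
    rw [Fintype.linearIndependent_iff]
    intro g hg
    set P : Finset (Fin k) := Finset.univ.filter (fun i => 0 < g i) with hP
    set N : Finset (Fin k) := Finset.univ.filter (fun i => ¬ 0 < g i) with hN
    set p : Fin 4 → ℝ := ∑ i ∈ P, g i • v i with hp
    have hsplit : p + ∑ i ∈ N, g i • v i = 0 := by
      rw [hp, hP, hN, Finset.sum_filter_add_sum_filter_not]
      exact hg
    have hpP : p = ∑ i ∈ N, (-g i) • v i := by
      have h := eq_neg_of_add_eq_zero_left hsplit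
      rw [h, ← Finset.sum_neg_distrib]
      simp [neg_smul]
    have hppq : minkB p p = ∑ i ∈ P, ∑ j ∈ N, g i * ((-g j) * mink (v i) (v j)) := by
      nth_rewrite 2 [hpP]
      nth_rewrite 1 [hp]
      exact minkB_sum_sum P N g (fun j => -g j) v
    have hpp : minkB p p ≤ 0 := by
      rw [hppq]
      apply Finset.sum_nonpos
      intro i hi
      apply Finset.sum_nonpos
      intro j hj
      simp only [hP, hN, Finset.mem_filter, Finset.mem_univ, true_and] at hi hj
      have hij : i ≠ j := fun h => hj (h ▸ hi)
      have h1 : 0 ≤ -g j := by linarith [not_lt.mp hj]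
      exact mul_nonpos_of_nonneg_of_nonpos (le_of_lt hi)
        (mul_nonpos_of_nonneg_of_nonpos h1 (hnonobtuse i j hij))
    have hxp : mink x p = 0 := by
      have h : minkB x p = 0 := by
        rw [hp, minkB_sum_right]
        exact Finset.sum_eq_zero fun i _ => by rw [horth i, mul_zero]
      simpa using h
    have hp0 : p = 0 := mink_posdef x p hx hxp (by simpa using hpp)
    -- p = 0 and interiority force P = ∅
    have hupsum : ∑ i ∈ P, g i * mink u (v i) = 0 := by
      have h : minkB u p = 0 := by rw [hp0]; simp [mink]
      rw [hp, minkB_sum_right] at h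
      exact h
    have hPempty : P = ∅ := by
      by_contra hne
      have hPne : P.Nonempty := Finset.nonempty_of_ne_empty hne
      have hlt : ∑ i ∈ P, g i * mink u (v i) < 0 := by
        apply Finset.sum_neg (fun i hi => ?_) hPne
        simp only [hP, Finset.mem_filter, Finset.mem_univ, true_and] at hi
        exact mul_neg_of_pos_of_neg hi (huv i)
      linarith [hupsum]
    have hgle : ∀ i, g i ≤ 0 := by
      intro i
      by_contra hgi
      have hiP : i ∈ P := by simp [hP]; exact lt_of_not_ge hgi
      rw [hPempty] at hiP
      simp at hiP
    have husum : ∑ i : Fin k, g i * mink u (v i) = 0 := by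
      have h : minkB u (∑ i : Fin k, g i • v i) = 0 := by rw [hg]; simp [mink]
      rw [minkB_sum_right] at h
      exact h
    intro i
    have hterm : ∀ j ∈ Finset.univ, (0:ℝ) ≤ g j * mink u (v j) := by
      intro j _
      nlinarith [hgle j, huv j, mul_nonneg (neg_nonneg.2 (hgle j)) (neg_nonneg.2 (le_of_lt (huv j)))]
    have hall := (Finset.sum_eq_zero_iff_of_nonneg hterm).mp husum i (Finset.mem_univ i)
    rcases mul_eq_zero.mp hall with h | h
    · exact h
    · exact absurd h (ne_of_lt (huv i))
  -- transfer to W and conclude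
  have hliW : LinearIndependent ℝ (fun i => (⟨v i, hvW i⟩ : W)) := by
    apply LinearIndependent.of_comp W.subtype
    exact hli
  have hcard := hliW.fintype_card_le_finrank
  rw [hdimW] at hcard
  simpa using hcard
end
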